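/- Let Λ be an m×m real symmetric positive semidefinite matrix, V a p'×p' real symmetric positive semidefinite matrix, Y₁ an m×n real matrix and Y₂ a p'×n real matrix. Define S₁₁ = (1/n) Λ^{1/2} Y₁ Y₁ᵀ Λ^{1/2}, S₁₂ = (1/n) Λ^{1/2} Y₁ Y₂ᵀ V^{1/2}, S₂₁ = S₁₂ᵀ, and S₂₂ = (1/n) V^{1/2} Y₂ Y₂ᵀ V^{1/2}. If ℓ ≠ 0 is not an eigenvalue of S₂₂ and not an eigenvalue of (1/n) Y₂ᵀ V Y₂, then S₁₁ + S₁₂ (ℓ I_{p'} − S₂₂)^{-1} S₂₁ = (ℓ/n) Λ^{1/2} Y₁ (ℓ I_n − (1/n) Y₂ᵀ V Y₂)^{-1} Y₁ᵀ Λ^{1/2}. -/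

import Mathlib

/-!
With `A = V^{1/2} Y₂` and `B = n⁻¹ Y₂ᵀ V^{1/2}` one has `S₂₂ = AB` and `n⁻¹ Y₂ᵀ V Y₂ = BA`
(this is where `V^{1/2} V^{1/2} = V` enters), and the left side factors as
`n⁻¹ Λ^{1/2} Y₁ (1 + B (ℓ - AB)⁻¹ A) Y₁ᵀ Λ^{1/2}`. The push-through relation
`(ℓ - BA) B = B (ℓ - AB)` gives `(ℓ - BA) (1 + B (ℓ - AB)⁻¹ A) = ℓ`, i.e.
`1 + B (ℓ - AB)⁻¹ A = ℓ (ℓ - BA)⁻¹`.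
-/

open Matrix

namespace Matrix.PosSemidef

open scoped ComplexOrder

/-- The positive semidefinite square root of a positive semidefinite matrix
(the definition that Mathlib had under this name in December 2024). -/
noncomputable def sqrt {n 𝕜 : Type*} [Fintype n] [DecidableEq n] [RCLike 𝕜]
    {A : Matrix n n 𝕜} (hA : PosSemidef A) : Matrix n n 𝕜 :=
  hA.1.eigenvectorUnitary.1 * diagonal ((↑) ∘ (√·) ∘ hA.1.eigenvalues) *
  (star hA.1.eigenvectorUnitary : Matrix n n 𝕜)

end Matrix.PosSemidef

namespace Matrix

open scoped ComplexOrder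

variable {n 𝕜 : Type*} [Fintype n] [DecidableEq n] [RCLike 𝕜]

theorem PosSemidef.sqrt_mul_self {A : Matrix n n 𝕜} (hA : A.PosSemidef) :
    hA.sqrt * hA.sqrt = A := by
  have hsqrt : hA.sqrt = Unitary.conjStarAlgAut 𝕜 _ hA.1.eigenvectorUnitary
      (diagonal ((↑) ∘ (√·) ∘ hA.1.eigenvalues)) := by
    rw [Unitary.conjStarAlgAut_apply]; rfl
  conv_rhs => rw [hA.1.spectral_theorem]
  rw [hsqrt, ← map_mul, diagonal_mul_diagonal]
  congr 2
  ext i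
  simp [← RCLike.ofReal_mul, Real.mul_self_sqrt (hA.eigenvalues_nonneg i)]

theorem isUnit_smul_one_sub_of_forall_mulVec_eq_smul {K : Type*} [Field K] {N : Matrix n n K}
    {ℓ : K} (h : ∀ v, N *ᵥ v = ℓ • v → v = 0) : IsUnit (ℓ • (1 : Matrix n n K) - N) := by
  refine mulVec_injective_iff_isUnit.1 <|
    (injective_iff_map_eq_zero (ℓ • (1 : Matrix n n K) - N).mulVecLin).2 fun v hv => h v ?_
  rw [mulVecLin_apply, sub_mulVec, smul_mulVec, one_mulVec, sub_eq_zero] at hv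
  exact hv.symm

theorem one_add_mul_inv_smul_one_sub_mul_mul {m R : Type*} [Fintype m] [DecidableEq m]
    [CommRing R] {A : Matrix m n R} {B : Matrix n m R} {ℓ : R}
    (hAB : IsUnit (ℓ • (1 : Matrix m m R) - A * B))
    (hBA : IsUnit (ℓ • (1 : Matrix n n R) - B * A)) :
    1 + B * (ℓ • 1 - A * B)⁻¹ * A = ℓ • (ℓ • 1 - B * A)⁻¹ := by
  set M := ℓ • (1 : Matrix n n R) - B * A
  set N := ℓ • (1 : Matrix m m R) - A * B
  have hpush : M * B = B * N := by
    simp only [M, N, Matrix.sub_mul, Matrix.mul_sub, Matrix.smul_mul, Matrix.mul_smul,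
      Matrix.one_mul, Matrix.mul_one, Matrix.mul_assoc]
  have hinv : M * (1 + B * N⁻¹ * A) = ℓ • 1 := by
    rw [Matrix.mul_add, Matrix.mul_one, ← Matrix.mul_assoc, ← Matrix.mul_assoc, hpush,
      Matrix.mul_assoc B, Matrix.mul_nonsing_inv _ ((isUnit_iff_isUnit_det N).1 hAB),
      Matrix.mul_one, sub_add_cancel]
  calc 1 + B * N⁻¹ * A = M⁻¹ * (M * (1 + B * N⁻¹ * A)) :=
        (nonsing_inv_mul_cancel_left _ _ ((isUnit_iff_isUnit_det M).1 hBA)).symm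
    _ = ℓ • M⁻¹ := by rw [hinv, Matrix.mul_smul, Matrix.mul_one]

end Matrix

theorem statement12_general (m p' n : ℕ)
    (Λ : Matrix (Fin m) (Fin m) ℝ) (hΛ : Λ.PosSemidef)
    (V : Matrix (Fin p') (Fin p') ℝ) (hV : V.PosSemidef)
    (Y₁ : Matrix (Fin m) (Fin n) ℝ) (Y₂ : Matrix (Fin p') (Fin n) ℝ)
    (ℓ : ℝ)
    (h1 : ∀ v : Fin p' → ℝ,
      ((n : ℝ)⁻¹ • (hV.sqrt * Y₂ * Y₂ᵀ * hV.sqrt)).mulVec v = ℓ • v → v = 0)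
    (h2 : ∀ v : Fin n → ℝ,
      ((n : ℝ)⁻¹ • (Y₂ᵀ * V * Y₂)).mulVec v = ℓ • v → v = 0) :
    (n : ℝ)⁻¹ • (hΛ.sqrt * Y₁ * Y₁ᵀ * hΛ.sqrt) +
      ((n : ℝ)⁻¹ • (hΛ.sqrt * Y₁ * Y₂ᵀ * hV.sqrt)) *
        (ℓ • (1 : Matrix (Fin p') (Fin p') ℝ) -
          (n : ℝ)⁻¹ • (hV.sqrt * Y₂ * Y₂ᵀ * hV.sqrt))⁻¹ *
        ((n : ℝ)⁻¹ • (hV.sqrt * Y₂ * Y₁ᵀ * hΛ.sqrt)) =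
      (ℓ / (n : ℝ)) • (hΛ.sqrt * Y₁ *
        (ℓ • (1 : Matrix (Fin n) (Fin n) ℝ) - (n : ℝ)⁻¹ • (Y₂ᵀ * V * Y₂))⁻¹ *
        Y₁ᵀ * hΛ.sqrt) := by
  set L := hΛ.sqrt
  set W := hV.sqrt
  set c : ℝ := (n : ℝ)⁻¹
  have hAB : c • (W * Y₂ * Y₂ᵀ * W) = W * Y₂ * (c • (Y₂ᵀ * W)) := by
    simp only [Matrix.mul_smul, Matrix.mul_assoc]
  have hBA : c • (Y₂ᵀ * V * Y₂) = c • (Y₂ᵀ * W) * (W * Y₂) := by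
    simp only [W, Matrix.smul_mul, Matrix.mul_assoc, ← hV.sqrt_mul_self]
  rw [hAB] at h1 ⊢
  rw [hBA] at h2 ⊢
  have key := one_add_mul_inv_smul_one_sub_mul_mul
    (isUnit_smul_one_sub_of_forall_mulVec_eq_smul h1)
    (isUnit_smul_one_sub_of_forall_mulVec_eq_smul h2)
  set R := (ℓ • 1 - W * Y₂ * (c • (Y₂ᵀ * W)))⁻¹
  calc _ = c • (L * Y₁ * (1 + c • (Y₂ᵀ * W) * R * (W * Y₂)) * Y₁ᵀ * L) := by
        simp only [Matrix.mul_add, Matrix.add_mul, Matrix.mul_one, Matrix.smul_mul, Matrix.mul_smul,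
          smul_add, Matrix.mul_assoc]
    _ = _ := by
        rw [key, div_eq_inv_mul]
        simp only [Matrix.smul_mul, Matrix.mul_smul, smul_smul, c]

/-- the block resolvent identity
`S₁₁ + S₁₂(ℓI - S₂₂)⁻¹S₂₁ = (ℓ/n) Λ^{1/2} Y₁ (ℓIₙ - (1/n) Y₂ᵀ V Y₂)⁻¹ Y₁ᵀ Λ^{1/2}`. -/
theorem statement12 (m p' n : ℕ) (hn : 0 < n)
    (Λ : Matrix (Fin m) (Fin m) ℝ) (hΛ : Λ.PosSemidef)
    (V : Matrix (Fin p') (Fin p') ℝ) (hV : V.PosSemidef)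
    (Y₁ : Matrix (Fin m) (Fin n) ℝ) (Y₂ : Matrix (Fin p') (Fin n) ℝ)
    (ℓ : ℝ) (hℓ : ℓ ≠ 0)
    (h1 : ∀ v : Fin p' → ℝ,
      ((n : ℝ)⁻¹ • (hV.sqrt * Y₂ * Y₂ᵀ * hV.sqrt)).mulVec v = ℓ • v → v = 0)
    (h2 : ∀ v : Fin n → ℝ,
      ((n : ℝ)⁻¹ • (Y₂ᵀ * V * Y₂)).mulVec v = ℓ • v → v = 0) :
    (n : ℝ)⁻¹ • (hΛ.sqrt * Y₁ * Y₁ᵀ * hΛ.sqrt) +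
      ((n : ℝ)⁻¹ • (hΛ.sqrt * Y₁ * Y₂ᵀ * hV.sqrt)) *
        (ℓ • (1 : Matrix (Fin p') (Fin p') ℝ) -
          (n : ℝ)⁻¹ • (hV.sqrt * Y₂ * Y₂ᵀ * hV.sqrt))⁻¹ *
        ((n : ℝ)⁻¹ • (hV.sqrt * Y₂ * Y₁ᵀ * hΛ.sqrt)) =
      (ℓ / (n : ℝ)) • (hΛ.sqrt * Y₁ *
        (ℓ • (1 : Matrix (Fin n) (Fin n) ℝ) - (n : ℝ)⁻¹ • (Y₂ᵀ * V * Y₂))⁻¹ *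
        Y₁ᵀ * hΛ.sqrt) :=
  statement12_general m p' n Λ hΛ V hV Y₁ Y₂ ℓ h1 h2
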